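/- Let α : [0,∞) → (0,∞) be essentially bounded, γ > 0, and define H : [0,∞)×ℝ×ℝ → ℝ by H(t,x,p) := max{α(t)|p||x| − α(t)e^{−γt}, 0} + |p|. Fix any t ∈ [0,∞) with α(t) > 0. Then there exist no functions f(t,·,·) : ℝ×B → ℝ and l(t,·,·) : ℝ×B → ℝ (B the closed unit ball in ℝ^{M} for some M) that are continuous in (x,u) and satisfy gph H*(t,x,·) = {(f(t,x,u), l(t,x,u)) : u ∈ B} for all x ∈ ℝ; that is, H admits no graphical representation with controls in a closed ball and continuous dynamics and cost. -/

import Mathlib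

open MeasureTheory Set Filter Topology

noncomputable section

namespace HJB

/-- `ℝ^n`. -/
abbrev Euc (n : ℕ) : Type := EuclideanSpace ℝ (Fin n)

/-! ### Legendre–Fenchel conjugate (in the last variable) -/

/-- The Legendre–Fenchel conjugate of a real-valued function on `ℝ^N`,
with values in `ℝ ∪ {±∞}` (it is never `⊥`). -/
def conj {N : ℕ} (h : Euc N → ℝ) (v : Euc N) : EReal :=
  ⨆ p : Euc N, (((inner ℝ v p : ℝ) - h p : ℝ) : EReal)

/-- The effective domain of the conjugate. -/
def domConj {N : ℕ} (h : Euc N → ℝ) : Set (Euc N) := {v | conj h v ≠ ⊤}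

/-- The epigraph of the conjugate. -/
def epiConj {N : ℕ} (h : Euc N → ℝ) : Set (Euc N × ℝ) :=
  {q | conj h q.1 ≤ (q.2 : EReal)}

/-- The graph of the conjugate. -/
def gphConj {N : ℕ} (h : Euc N → ℝ) : Set (Euc N × ℝ) :=
  {q | conj h q.1 = (q.2 : EReal)}

/-- `H*(t,x,v)`, the conjugate of a Hamiltonian in the last variable. -/
def Hstar {N : ℕ} (H : ℝ → Euc N → Euc N → ℝ) (t : ℝ) (x v : Euc N) : EReal :=
  conj (H t x) v

/-! ### Integrability classes -/

/-- `φ ∈ L¹([0,∞);ℝ)`. -/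
def MemL1 (φ : ℝ → ℝ) : Prop := IntegrableOn φ (Ici 0)

/-- `c ∈ L¹_loc([0,∞);[0,∞))`. -/
def MemL1loc (c : ℝ → ℝ) : Prop :=
  (∀ t, 0 ≤ c t) ∧ ∀ b : ℝ, IntegrableOn c (Icc 0 b)

/-- The class `𝓛_loc` : nonnegative, locally integrable on `[0,∞)`, with uniformly
small integrals over short subintervals. -/
def MemLloc (k : ℝ → ℝ) : Prop :=
  MemL1loc k ∧ ∀ ε > (0:ℝ), ∃ σ > (0:ℝ), ∀ a b : ℝ, 0 ≤ a → a ≤ b → b - a ≤ σ →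
    (∫ τ in a..b, k τ) ≤ ε

/-! ### Cones -/

/-- The Bouligand tangent cone `T_A(x) = {ζ : liminf_{τ→0+} dist(x+τζ,A)/τ = 0}`. -/
def tangentConeB {F : Type*} [NormedAddCommGroup F] [NormedSpace ℝ F]
    (A : Set F) (x : F) : Set F :=
  {ζ | ∀ ε > (0:ℝ), ∀ δ > (0:ℝ), ∃ τ : ℝ, 0 < τ ∧ τ < δ ∧
    Metric.infDist (x + τ • ζ) A ≤ ε * τ}

/-- The regular normal cone (polar of the tangent cone). -/
def regNormal {N : ℕ} (A : Set (Euc N)) (x : Euc N) : Set (Euc N) :=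
  {ξ | ∀ ζ ∈ tangentConeB A x, (inner ℝ ζ ξ : ℝ) ≤ 0}

/-- The limiting normal cone. -/
def limNormal {N : ℕ} (A : Set (Euc N)) (x : Euc N) : Set (Euc N) :=
  {ξ | ∃ xs ξs : ℕ → Euc N, (∀ n, xs n ∈ A ∧ ξs n ∈ regNormal A (xs n)) ∧
    Tendsto xs atTop (nhds x) ∧ Tendsto ξs atTop (nhds ξ)}

/-- The set `N¹_{y,η}` of unit vectors in closed convex hulls of limiting normal
cones at boundary points near `y`. -/
def N1set {N : ℕ} (A : Set (Euc N)) (y : Euc N) (η : ℝ) : Set (Euc N) :=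
  {n | ‖n‖ = 1 ∧ ∃ x ∈ frontier A ∩ Metric.closedBall y η,
    n ∈ closure (convexHull ℝ (limNormal A x))}

/-- The outward pointing condition (OPC) for a set-valued velocity map `FF`. -/
def OPC {N : ℕ} (A : Set (Euc N)) (FF : ℝ → Euc N → Set (Euc N)) : Prop :=
  ∃ η > (0:ℝ), ∃ r > (0:ℝ), ∃ Mc : ℝ, 0 ≤ Mc ∧
    ∀ᵐ t ∂(volume.restrict (Ici (0:ℝ))), ∀ y : Euc N,
      (∃ z ∈ frontier A, dist y z ≤ η) →
      ∀ v ∈ FF t y, (∀ ε > (0:ℝ), ∃ n ∈ N1set A y η, (inner ℝ n v : ℝ) ≤ ε) →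
        ∃ w ∈ FF t y, dist w v ≤ Mc ∧
          ∀ n ∈ N1set A y η, r ≤ (inner ℝ n w : ℝ) ∧ r ≤ (inner ℝ n (w - v) : ℝ)

/-- `(OPC)_H` : the OPC condition for `dom H*`. -/
def OPCH {N : ℕ} (H : ℝ → Euc N → Euc N → ℝ) (A : Set (Euc N)) : Prop :=
  OPC A (fun t y => domConj (H t y))

/-! ### Conditions (h)'' and (h)''_H -/

/-- The image set `(f,l)(t,x,U(t))`. -/
def flimg {N M : ℕ} (U : ℝ → Set (Euc M)) (f : ℝ → Euc N → Euc M → Euc N)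
    (l : ℝ → Euc N → Euc M → ℝ) (t : ℝ) (x : Euc N) : Set (Euc N × ℝ) :=
  (fun u => (f t x u, l t x u)) '' U t

/-- Condition (h)'' for a control triple `(U,f,l)`, a constraint set `A`, and
data functions `φ ∈ L¹`, `c ∈ L¹_loc`, `k, q ∈ 𝓛_loc`. -/
def Hpp {N M : ℕ} (U : ℝ → Set (Euc M)) (f : ℝ → Euc N → Euc M → Euc N)
    (l : ℝ → Euc N → Euc M → ℝ) (A : Set (Euc N)) (φ c k q : ℝ → ℝ) : Prop :=
  (∀ O : Set (Euc M), IsOpen O → MeasurableSet {t : ℝ | (U t ∩ O).Nonempty}) ∧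
  (∀ t, (U t).Nonempty ∧ IsClosed (U t)) ∧
  -- (h1)
  (∀ x u, Measurable fun t => f t x u) ∧
  (∀ x u, Measurable fun t => l t x u) ∧
  (∀ t, Continuous fun q : Euc N × Euc M => f t q.1 q.2) ∧
  (∀ t, Continuous fun q : Euc N × Euc M => l t q.1 q.2) ∧
  MemL1 φ ∧ (∀ t, 0 ≤ t → ∀ x u, φ t ≤ l t x u) ∧
  -- (h2)
  MemL1loc c ∧
  (∀ t, 0 ≤ t → ∀ x, ∀ u ∈ U t, ‖f t x u‖ + |l t x u| ≤ c t * (1 + ‖x‖)) ∧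
  -- (h3)
  (∀ t, 0 ≤ t → ∀ x, IsClosed (flimg U f l t x) ∧
    Tendsto (fun y => EMetric.hausdorffEdist (flimg U f l t y) (flimg U f l t x))
      (nhds x) (nhds 0)) ∧
  -- (h4)
  (∀ t, 0 ≤ t → ∀ x, Convex ℝ {y : Euc N × ℝ |
    ∃ u ∈ U t, ∃ r : ℝ, 0 ≤ r ∧ y = (f t x u, l t x u + r)}) ∧
  -- (h5)
  MemLloc q ∧
  (∀ t, 0 ≤ t → ∀ x ∈ frontier A, ∀ u ∈ U t, ‖f t x u‖ + |l t x u| ≤ q t) ∧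
  -- (h6)
  MemLloc k ∧
  (∀ t, 0 ≤ t → ∀ x y, ∀ u ∈ U t,
    ‖f t x u - f t y u‖ + |l t x u - l t y u| ≤ k t * ‖x - y‖)

/-- Condition (h)''_H for a Hamiltonian `H`, a constraint set `A`, a function `λ`,
and data functions `φ ∈ L¹`, `c ∈ L¹_loc`, `k, q ∈ 𝓛_loc`. -/
def HppH {N : ℕ} (H : ℝ → Euc N → Euc N → ℝ) (A : Set (Euc N))
    (lam : ℝ → Euc N → ℝ) (φ c k q : ℝ → ℝ) : Prop :=
  -- (H1)
  (∀ x p, Measurable fun t => H t x p) ∧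
  (∀ t p, Continuous fun x => H t x p) ∧
  (∀ t x, ConvexOn ℝ univ (H t x)) ∧
  -- (H2)
  MemL1 φ ∧ (∀ t, 0 ≤ t → ∀ x, H t x 0 ≤ -φ t) ∧
  -- regularity of λ and of the data
  (∀ t x, 0 ≤ lam t x) ∧
  (∀ x, Measurable fun t => lam t x) ∧
  (∀ t, Continuous fun x => lam t x) ∧
  MemL1loc c ∧ MemLloc k ∧ MemLloc q ∧
  -- (H3)
  (∀ t, 0 ≤ t → ∀ x, lam t x ≤ c t * (1 + ‖x‖)) ∧
  (∀ t, 0 ≤ t → ∀ x ∈ frontier A, lam t x ≤ q t) ∧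
  -- (H4)
  (∀ t, 0 ≤ t → ∀ x y, |lam t x - lam t y| ≤ k t * ‖x - y‖) ∧
  -- (H5)
  (∀ t, 0 ≤ t → ∀ x y p, |H t x p - H t y p| ≤ k t * (1 + ‖p‖) * ‖x - y‖) ∧
  -- (H6)
  (∀ t, 0 ≤ t → ∀ x p p', |H t x p - H t x p'| ≤ lam t x * ‖p - p'‖) ∧
  -- (H7)
  (∀ t, 0 ≤ t → ∀ x v, Hstar H t x v ≠ ⊤ → |(Hstar H t x v).toReal| ≤ lam t x)

/-! ### Trajectories and value functions -/

/-- `x` is locally absolutely continuous on `[t₀,∞)` with a.e. derivative `dx`. -/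
def IsTrajOn {N : ℕ} (x dx : ℝ → Euc N) (t₀ : ℝ) : Prop :=
  (∀ b : ℝ, IntegrableOn dx (Icc t₀ b)) ∧
  ∀ t, t₀ ≤ t → x t = x t₀ + ∫ s in t₀..t, dx s

/-- `S_H(t₀,x₀)` : admissible pairs (trajectory, a.e. derivative) for the
calculus-of-variations problem with constraint set `A`. -/
def SH {N : ℕ} (H : ℝ → Euc N → Euc N → ℝ) (A : Set (Euc N)) (t₀ : ℝ)
    (x₀ : Euc N) : Set ((ℝ → Euc N) × (ℝ → Euc N)) :=
  {p | IsTrajOn p.1 p.2 t₀ ∧ p.1 t₀ = x₀ ∧ (∀ t, t₀ ≤ t → p.1 t ∈ A) ∧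
    ∀ᵐ t ∂(volume.restrict (Ici t₀)), Hstar H t (p.1 t) (p.2 t) ≠ ⊤}

open Classical in
/-- The cost `∫_{t₀}^∞ H*(t,x(t),ẋ(t)) dt ∈ ℝ ∪ {+∞}` of a trajectory. -/
def trajCost {N : ℕ} (H : ℝ → Euc N → Euc N → ℝ) (t₀ : ℝ)
    (p : (ℝ → Euc N) × (ℝ → Euc N)) : EReal :=
  if (∀ᵐ t ∂(volume.restrict (Ici t₀)), Hstar H t (p.1 t) (p.2 t) ≠ ⊤) ∧
     IntegrableOn (fun t => (Hstar H t (p.1 t) (p.2 t)).toReal) (Ici t₀)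
  then (((∫ t in Ici t₀, (Hstar H t (p.1 t) (p.2 t)).toReal) : ℝ) : EReal)
  else ⊤

/-- The value function `V` of the calculus-of-variations problem. -/
def valueV {N : ℕ} (H : ℝ → Euc N → Euc N → ℝ) (A : Set (Euc N)) (t₀ : ℝ)
    (x₀ : Euc N) : EReal :=
  sInf (trajCost H t₀ '' SH H A t₀ x₀)

/-- `S_f(t₀,x₀)` : admissible trajectory-control pairs of the control system. -/
def Sf {N M : ℕ} (U : ℝ → Set (Euc M)) (f : ℝ → Euc N → Euc M → Euc N)
    (A : Set (Euc N)) (t₀ : ℝ) (x₀ : Euc N) :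
    Set ((ℝ → Euc N) × (ℝ → Euc M)) :=
  {p | Measurable p.2 ∧ (∀ᵐ t ∂(volume.restrict (Ici t₀)), p.2 t ∈ U t) ∧
    (∀ b : ℝ, IntegrableOn (fun s => f s (p.1 s) (p.2 s)) (Icc t₀ b)) ∧
    p.1 t₀ = x₀ ∧ (∀ t, t₀ ≤ t → p.1 t ∈ A) ∧
    ∀ t, t₀ ≤ t → p.1 t = x₀ + ∫ s in t₀..t, f s (p.1 s) (p.2 s)}

open Classical in
/-- The cost `∫_{t₀}^∞ l(t,x(t),u(t)) dt ∈ ℝ ∪ {+∞}` of a trajectory-control pair. -/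
def ctrlCost {N M : ℕ} (l : ℝ → Euc N → Euc M → ℝ) (t₀ : ℝ)
    (p : (ℝ → Euc N) × (ℝ → Euc M)) : EReal :=
  if IntegrableOn (fun t => l t (p.1 t) (p.2 t)) (Ici t₀)
  then (((∫ t in Ici t₀, l t (p.1 t) (p.2 t)) : ℝ) : EReal)
  else ⊤

/-- The value function `𝒱` of the optimal control problem. -/
def valueVc {N M : ℕ} (U : ℝ → Set (Euc M)) (f : ℝ → Euc N → Euc M → Euc N)
    (l : ℝ → Euc N → Euc M → ℝ) (A : Set (Euc N)) (t₀ : ℝ) (x₀ : Euc N) : EReal :=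
  sInf (ctrlCost l t₀ '' Sf U f A t₀ x₀)

/-! ### Conditions (B), (B)_H, (LB), (VIC) -/

/-- Condition `(B)_H`. -/
def CondBH {N : ℕ} (H : ℝ → Euc N → Euc N → ℝ) (A : Set (Euc N)) : Prop :=
  (∃ t₀ ≥ (0:ℝ), ∃ x₀ ∈ A, valueV H A t₀ x₀ ≠ ⊤) ∧
  ∃ T > (0:ℝ), ∃ ψ : ℝ → ℝ, (∀ t, 0 ≤ ψ t) ∧ IntegrableOn ψ (Ici T) ∧
    ∀ t₀, T ≤ t₀ → ∀ x₀ ∈ A, valueV H A t₀ x₀ ≠ ⊤ →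
      ∀ p ∈ SH H A t₀ x₀,
        ∀ᵐ t ∂(volume.restrict (Ici t₀)), |(Hstar H t (p.1 t) (p.2 t)).toReal| ≤ ψ t

/-- Condition `(B)`. -/
def CondB {N M : ℕ} (U : ℝ → Set (Euc M)) (f : ℝ → Euc N → Euc M → Euc N)
    (l : ℝ → Euc N → Euc M → ℝ) (A : Set (Euc N)) (T : ℝ) (ψ : ℝ → ℝ) : Prop :=
  (∃ t₀ ≥ (0:ℝ), ∃ x₀ ∈ A, valueVc U f l A t₀ x₀ ≠ ⊤) ∧
  0 < T ∧ (∀ t, 0 ≤ ψ t) ∧ IntegrableOn ψ (Ici T) ∧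
    ∀ t₀, T ≤ t₀ → ∀ x₀ ∈ A, valueVc U f l A t₀ x₀ ≠ ⊤ →
      ∀ p ∈ Sf U f A t₀ x₀,
        ∀ᵐ t ∂(volume.restrict (Ici t₀)), |l t (p.1 t) (p.2 t)| ≤ ψ t

/-- Condition (LB), with the family `ψ r` of integrable bounds. -/
def CondLB {N M : ℕ} (U : ℝ → Set (Euc M)) (f : ℝ → Euc N → Euc M → Euc N)
    (l : ℝ → Euc N → Euc M → ℝ) (A : Set (Euc N)) (ψ : ℝ → ℝ → ℝ) : Prop :=
  ∀ r, 0 < r → (∀ t, 0 ≤ ψ r t) ∧ IntegrableOn (ψ r) (Ici 0) ∧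
    ∀ t₀, 0 ≤ t₀ → ∀ x₀ ∈ A, ‖x₀‖ ≤ r → ∀ p ∈ Sf U f A t₀ x₀,
      ∀ᵐ t ∂(volume.restrict (Ici t₀)), |l t (p.1 t) (p.2 t)| ≤ ψ r t

/-- Condition `(VIC)_H`. -/
def VICH {N : ℕ} (H : ℝ → Euc N → Euc N → ℝ) (A : Set (Euc N)) : Prop :=
  ∃ C : Set ℝ, C ⊆ Ioi 0 ∧ volume (Ioi 0 \ C) = 0 ∧
    ∀ t ∈ C, ∀ x ∈ A,
      (∃ v, Hstar H t x v ≠ ⊤ ∧ v ∈ tangentConeB A x) ∧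
      ∀ v, Hstar H t x v ≠ ⊤ → -v ∈ tangentConeB A x

/-- Condition (VIC) for a dynamics `f` with controls `U`. -/
def VICf {N M : ℕ} (U : ℝ → Set (Euc M)) (f : ℝ → Euc N → Euc M → Euc N)
    (A : Set (Euc N)) : Prop :=
  ∃ C : Set ℝ, C ⊆ Ioi 0 ∧ volume (Ioi 0 \ C) = 0 ∧
    ∀ t ∈ C, ∀ x ∈ A,
      (∃ u ∈ U t, f t x u ∈ tangentConeB A x) ∧
      ∀ u ∈ U t, -(f t x u) ∈ tangentConeB A x

/-! ### Weak solutions -/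

/-- The time–state–value space `ℝ × ℝ^N × ℝ`. -/
abbrev TXR (N : ℕ) : Type := ℝ × Euc N × ℝ

/-- The natural pairing on `ℝ × ℝ^N × ℝ`. -/
def pairTX {N : ℕ} (p q : TXR N) : ℝ :=
  p.1 * q.1 + (inner ℝ p.2.1 q.2.1 : ℝ) + p.2.2 * q.2.2

/-- The regular normal cone in `ℝ × ℝ^N × ℝ` (polar of the tangent cone). -/
def regNormalTX {N : ℕ} (S : Set (TXR N)) (z : TXR N) : Set (TXR N) :=
  {ξ | ∀ ζ ∈ tangentConeB S z, pairTX ζ ξ ≤ 0}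

/-- The epigraph of an extended-real function of `(t,x)`. -/
def epiTX {N : ℕ} (W : ℝ → Euc N → EReal) : Set (TXR N) :=
  {z | W z.1 z.2.1 ≤ (z.2.2 : EReal)}

/-- The epigraph of `W(t,·)`. -/
def epiX {N : ℕ} (W : ℝ → Euc N → EReal) (t : ℝ) : Set (Euc N × ℝ) :=
  {q | W t q.1 ≤ (q.2 : EReal)}

/-- The Fréchet subdifferential of `W` at `(t,x)` (only meaningful when `W t x` is finite). -/
def frSubdiff {N : ℕ} (W : ℝ → Euc N → EReal) (t : ℝ) (x : Euc N) :
    Set (ℝ × Euc N) :=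
  {p | ∀ ε > (0:ℝ), ∃ δ > (0:ℝ), ∀ s : ℝ, ∀ y : Euc N,
    dist ((s, y) : ℝ × Euc N) (t, x) < δ →
    ((((W t x).toReal + p.1 * (s - t) + (inner ℝ p.2 (y - x) : ℝ)
      - ε * dist ((s, y) : ℝ × Euc N) (t, x)) : ℝ) : EReal) ≤ W s y}

/-- A lower semicontinuous `W : [0,∞) × A → ℝ ∪ {+∞}` is a weak solution of
`-W_t + H(t,x,-W_x) = 0` on `(0,∞) × A`. -/
def IsWeakSolution {N : ℕ} (H : ℝ → Euc N → Euc N → ℝ) (A : Set (Euc N))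
    (W : ℝ → Euc N → EReal) : Prop :=
  ∃ C : Set ℝ, C ⊆ Ioi 0 ∧ volume (Ioi 0 \ C) = 0 ∧
    (∀ t ∈ C, ∀ x ∈ frontier A, W t x ≠ ⊤ →
      (∀ p ∈ frSubdiff W t x, 0 ≤ -p.1 + H t x (-p.2)) ∧
      (∀ pt : ℝ, ∀ px : Euc N,
        ((pt, px, (0:ℝ)) : TXR N) ∈ regNormalTX (epiTX W) (t, x, (W t x).toReal) →
        ∀ ε > (0:ℝ), ∃ v : Euc N, Hstar H t x v ≠ ⊤ ∧ pt - ε ≤ (inner ℝ v (-px) : ℝ))) ∧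
    (∀ t ∈ C, ∀ x ∈ interior A, W t x ≠ ⊤ →
      (∀ p ∈ frSubdiff W t x, -p.1 + H t x (-p.2) = 0) ∧
      (∀ pt : ℝ, ∀ px : Euc N,
        ((pt, px, (0:ℝ)) : TXR N) ∈ regNormalTX (epiTX W) (t, x, (W t x).toReal) →
        IsLUB {r : ℝ | ∃ v : Euc N, Hstar H t x v ≠ ⊤ ∧ r = (inner ℝ v (-px) : ℝ)} pt))

/-- Local absolute continuity of a set-valued map `t ⇝ P(t)` with nonempty closed
values. -/
def LocAbsCont {F : Type*} [MetricSpace F] (P : ℝ → Set F) : Prop :=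
  (∀ t, 0 ≤ t → (P t).Nonempty ∧ IsClosed (P t)) ∧
  ∀ S T : ℝ, 0 ≤ S → S ≤ T → ∀ ε > (0:ℝ), ∀ K : Set F, IsCompact K →
    ∃ δ > (0:ℝ), ∀ m : ℕ, ∀ s t : ℕ → ℝ,
      (∀ i, i < m → S ≤ s i ∧ s i < t i ∧ t i ≤ T) →
      (∀ i, i + 1 < m → t i ≤ s (i + 1)) →
      (∑ i ∈ Finset.range m, (t i - s i)) < δ →
      ∃ e : ℕ → ℝ,
        (∀ i, i < m → 0 ≤ e i ∧
          (P (t i) ∩ K ⊆ {y | ∃ z ∈ P (s i), dist y z ≤ e i}) ∧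
          (P (s i) ∩ K ⊆ {y | ∃ z ∈ P (t i), dist y z ≤ e i})) ∧
        (∑ i ∈ Finset.range m, e i) < ε

/-! ### The class 𝓗 -/

/-- The rescaled Hamiltonian `IH(t,x,p) := θ(t)⁻¹ H(t,x,θ(t)p)`. -/
def IHam {N : ℕ} (H : ℝ → Euc N → Euc N → ℝ) (θ : ℝ → ℝ) :
    ℝ → Euc N → Euc N → ℝ :=
  fun t x p => (θ t)⁻¹ * H t x (θ t • p)

/-- The `L^∞([0,∞))` norm. -/
def supNormInfty (θ : ℝ → ℝ) : ℝ :=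
  (essSup (fun t => ENNReal.ofReal |θ t|) (volume.restrict (Ici (0:ℝ)))).toReal


/-- The class `𝓗(θ,λ,{ψ_r},φ,c,A)`. -/
def ClassH {N : ℕ} (H : ℝ → Euc N → Euc N → ℝ) (θ : ℝ → ℝ)
    (lam : ℝ → Euc N → ℝ) (ψ : ℝ → ℝ → ℝ) (φ c : ℝ → ℝ) (A : Set (Euc N)) : Prop :=
  (∀ t, 0 < θ t) ∧ Measurable θ ∧
  essSup (fun t => ENNReal.ofReal |θ t|) (volume.restrict (Ici (0:ℝ))) ≠ ⊤ ∧
  (∀ r, 0 < r → (∀ t, 0 ≤ ψ r t) ∧ IntegrableOn (ψ r) (Ici 0)) ∧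
  (∃ k q : ℝ → ℝ, HppH (IHam H θ) A lam φ c k q) ∧
  ∀ r, 0 < r → ∀ t₀, 0 ≤ t₀ → ∀ x₀ ∈ A, ‖x₀‖ ≤ r →
    ∀ p ∈ SH (IHam H θ) A t₀ x₀,
      ∀ᵐ t ∂(volume.restrict (Ici t₀)), θ t * lam t (p.1 t) ≤ ψ r t

/-- The Legendre–Fenchel conjugate of a function of a real variable. -/
def conj1 (h : ℝ → ℝ) (v : ℝ) : EReal :=
  ⨆ p : ℝ, ((v * p - h p : ℝ) : EReal)

/-- The graph of the conjugate of a function of a real variable. -/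
def gphConj1 (h : ℝ → ℝ) : Set (ℝ × ℝ) := {z | conj1 h z.1 = (z.2 : EReal)}

/- The graph of `H*(t,x,·)` fails to be closed under limits as `x → 0⁺`: for `x > 0` the
point `(1 + α(t)x, α(t)e^{-γt})` lies on it, but `H*(t,0,1) = 0`. A representation by
continuous `(f,l)` on a compact control set would make `x ↦ gph H*(t,x,·)` have closed graph. -/

theorem IsCompact.isClosed_setOf_mem_image {X Y Z : Type*} [TopologicalSpace X]
    [TopologicalSpace Y] [TopologicalSpace Z] [T2Space Z] {K : Set Y} (hK : IsCompact K)
    {g : X → Y → Z} (hg : ContinuousOn (fun q : X × Y => g q.1 q.2) (univ ×ˢ K)) :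
    IsClosed {p : X × Z | p.2 ∈ g p.1 '' K} := by
  have := isCompact_iff_compactSpace.mp hK
  have hgK : Continuous fun w : (X × Z) × K => g w.1.1 w.2 :=
    hg.comp_continuous (f := fun w : (X × Z) × K => (w.1.1, (w.2 : Y))) (by fun_prop)
      fun w => ⟨mem_univ _, w.2.2⟩
  have hC : IsClosed {w : (X × Z) × K | g w.1.1 w.2 = w.1.2} :=
    isClosed_eq hgK (by fun_prop)
  convert isClosedMap_fst_of_compactSpace _ hC using 1
  ext ⟨x, z⟩
  simp

lemma conj1_eq_of_isGreatest {h : ℝ → ℝ} {v c : ℝ}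
    (hc : IsGreatest (range fun p => v * p - h p) c) : conj1 h v = c := by
  obtain ⟨⟨p₀, hp₀⟩, hub⟩ := hc
  refine le_antisymm (iSup_le fun p => EReal.coe_le_coe_iff.mpr (hub ⟨p, rfl⟩)) ?_
  rw [← hp₀]
  exact le_iSup (fun p => ((v * p - h p : ℝ) : EReal)) p₀

/-- The slice `p ↦ H(t,x,p)`, with `a = α(t)` and `b = α(t)e^{-γt}`. -/
def exampleHam (a b x p : ℝ) : ℝ := max (a * |p| * |x| - b) 0 + |p|

lemma conj1_exampleHam_zero (a : ℝ) {b : ℝ} (hb : 0 ≤ b) :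
    conj1 (exampleHam a b 0) 1 = (0 : ℝ) := by
  refine conj1_eq_of_isGreatest ⟨⟨0, by simp [exampleHam, hb]⟩, ?_⟩
  rintro _ ⟨p, rfl⟩
  have := le_max_right (a * |p| * |0| - b) 0
  simp only [exampleHam]
  linarith [le_abs_self p]

lemma conj1_exampleHam_of_pos {a b x : ℝ} (ha : 0 < a) (hb : 0 ≤ b) (hx : 0 < x) :
    conj1 (exampleHam a b x) (1 + a * x) = b := by
  have hax : 0 < a * x := mul_pos ha hx
  -- the supremum is attained at the kink `p = b / (a x)` of the max
  have hp₀ : 0 ≤ b / (a * x) := div_nonneg hb hax.le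
  refine conj1_eq_of_isGreatest ⟨⟨b / (a * x), ?_⟩, ?_⟩
  · have hkink : a * (b / (a * x)) * x = b := by field_simp
    simp only [exampleHam, abs_of_nonneg hp₀, abs_of_pos hx, hkink, sub_self, max_self]
    field_simp
    ring
  · rintro _ ⟨p, rfl⟩
    have := le_max_left (a * |p| * |x| - b) 0
    simp only [exampleHam, abs_of_pos hx] at this ⊢
    nlinarith [le_abs_self p, abs_nonneg p]

theorem stmt_19_general (α : ℝ → ℝ)
    (γ : ℝ)
    (H : ℝ → ℝ → ℝ → ℝ)
    (hH : ∀ t x p, H t x p =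
      max (α t * |p| * |x| - α t * Real.exp (-γ * t)) 0 + |p|)
    (t : ℝ) (hαt : 0 < α t) :
    ¬ ∃ (M : ℕ) (f l : ℝ → Euc M → ℝ),
      (ContinuousOn (fun z : ℝ × Euc M => f z.1 z.2)
        (univ ×ˢ Metric.closedBall 0 1)) ∧
      (ContinuousOn (fun z : ℝ × Euc M => l z.1 z.2)
        (univ ×ˢ Metric.closedBall 0 1)) ∧
      ∀ x : ℝ, gphConj1 (H t x) =
        (fun u => (f x u, l x u)) '' Metric.closedBall (0 : Euc M) 1 := by
  rintro ⟨M, f, l, hf, hl, hgph⟩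
  set a := α t
  set b := a * Real.exp (-γ * t)
  have hb : 0 < b := mul_pos hαt (Real.exp_pos _)
  have hHt : ∀ x, H t x = exampleHam a b x := fun x => funext (hH t x)
  set graphs := {q : ℝ × ℝ × ℝ | q.2 ∈ gphConj1 (H t q.1)}
  have hclosed : IsClosed graphs := by
    simp_rw [graphs, hgph]
    exact IsCompact.isClosed_setOf_mem_image (g := fun x u => (f x u, l x u))
      (isCompact_closedBall _ _) (hf.prodMk hl)
  have hpos : ∀ x ∈ Ioi (0 : ℝ), (x, 1 + a * x, b) ∈ graphs := fun x hx => by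
    simp only [graphs, mem_ofPred_eq, gphConj1, hHt]
    exact conj1_exampleHam_of_pos hαt hb.le hx
  have hlim : Tendsto (fun x : ℝ => (x, 1 + a * x, b)) (𝓝[>] 0) (𝓝 (0, 1, b)) :=
    ((by fun_prop : Continuous fun x : ℝ => (x, 1 + a * x, b)).tendsto' 0 _
      (by simp)).mono_left nhdsWithin_le_nhds
  have hzero := hclosed.mem_of_tendsto hlim (eventually_nhdsWithin_of_forall hpos)
  simp only [graphs, mem_ofPred_eq, gphConj1, hHt, conj1_exampleHam_zero a hb.le] at hzero
  exact hb.ne (EReal.coe_eq_coe_iff.mp hzero)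

/-- Example `Ex1`. For the Hamiltonian
`H(t,x,p) = max(α(t)|p||x| - α(t)e^{-γt}, 0) + |p|` there is no graphical
representation with controls in a closed ball and continuous dynamics and cost. -/
theorem stmt_19 (α : ℝ → ℝ) (hαpos : ∀ s, 0 < α s)
    (hαbd : ∃ C : ℝ, ∀ᵐ s ∂(volume.restrict (Ici (0:ℝ))), α s ≤ C)
    (γ : ℝ) (hγ : 0 < γ)
    (H : ℝ → ℝ → ℝ → ℝ)
    (hH : ∀ t x p, H t x p =
      max (α t * |p| * |x| - α t * Real.exp (-γ * t)) 0 + |p|)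
    (t : ℝ) (ht : 0 ≤ t) (hαt : 0 < α t) :
    ¬ ∃ (M : ℕ) (f l : ℝ → Euc M → ℝ),
      (ContinuousOn (fun z : ℝ × Euc M => f z.1 z.2)
        (univ ×ˢ Metric.closedBall 0 1)) ∧
      (ContinuousOn (fun z : ℝ × Euc M => l z.1 z.2)
        (univ ×ˢ Metric.closedBall 0 1)) ∧
      ∀ x : ℝ, gphConj1 (H t x) =
        (fun u => (f x u, l x u)) '' Metric.closedBall (0 : Euc M) 1 :=
  stmt_19_general α γ H hH t hαt

end HJB
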